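/- The field generated over Q by the traces of s = [[1,0],[-1,1]], t = [[2i,2-i],[i,1-i]], h = [[2i√2,-3-i√2],[-3+i√2,-3i√2]], and all finite products of these matrices and their inverses, equals Q(i,√2), a degree-4 extension of Q. -/
import Mathlib

open Matrix Complex

noncomputable def s : Matrix (Fin 2) (Fin 2) ℂ := !![1, 0; -1, 1]
noncomputable def t : Matrix (Fin 2) (Fin 2) ℂ := !![2 * I, 2 - I; I, 1 - I]
noncomputable def h : Matrix (Fin 2) (Fin 2) ℂ :=
  !![2 * I * Real.sqrt 2, -3 - I * Real.sqrt 2; -3 + I * Real.sqrt 2, -3 * I * Real.sqrt 2]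

/-- All finite products of `s`, `t`, `h` and their inverses. -/
noncomputable def G : Submonoid (Matrix (Fin 2) (Fin 2) ℂ) :=
  Submonoid.closure {s, t, h, s⁻¹, t⁻¹, h⁻¹}

/-- The trace field: the subfield of `ℂ` generated over `ℚ` by the traces. -/
noncomputable def traceField : IntermediateField ℚ ℂ :=
  IntermediateField.adjoin ℚ {x : ℂ | ∃ M ∈ G, M.trace = x}

open IntermediateField Module

section Aux

lemma quad_finrank {F : Type*} [Field F] [Algebra F ℂ] (x : ℂ) (c : F)
    (hc : algebraMap F ℂ c = x ^ 2) (hx : x ∉ Set.range (algebraMap F ℂ)) :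
    Module.finrank F F⟮x⟯ = 2 := by
  set p : Polynomial F := Polynomial.X ^ 2 - Polynomial.C c with hp
  have hmonic : p.Monic := by
    apply Polynomial.monic_X_pow_sub_C
    norm_num
  have hdeg : p.natDegree = 2 := by
    simp [hp]
  have haev : Polynomial.aeval x p = 0 := by
    simp [hp, ← hc, Polynomial.aeval_def]
  have hint : IsIntegral F x := ⟨p, hmonic, haev⟩
  have hirr : Irreducible p := by
    rw [Polynomial.irreducible_iff_roots_eq_zero_of_degree_le_three (by omega) (by omega)]
    rw [Multiset.eq_zero_iff_forall_notMem]
    intro r hr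
    rw [Polynomial.mem_roots hmonic.ne_zero, Polynomial.IsRoot] at hr
    have hr2 : r ^ 2 = c := by
      simp [hp] at hr
      linear_combination hr
    have hsq : (algebraMap F ℂ r) ^ 2 = x ^ 2 := by rw [← map_pow, hr2, hc]
    rcases sq_eq_sq_iff_eq_or_eq_neg.mp hsq with hh | hh
    · exact hx ⟨r, hh⟩
    · exact hx ⟨-r, by simp [hh]⟩
  have := minpoly.eq_of_irreducible_of_monic hirr haev hmonic
  rw [adjoin.finrank hint, ← this, hdeg]

noncomputable def Rfield : IntermediateField ℚ ℂ :=
  Subfield.toIntermediateField Complex.ofRealHom.fieldRange (fun q => ⟨q, by simp⟩)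

lemma sqrt2_notin : (Real.sqrt 2 : ℂ) ∉ Set.range (algebraMap ℚ ℂ) := by
  rintro ⟨q, hq⟩
  have : (q : ℝ) = Real.sqrt 2 := by
    have := congrArg Complex.re hq
    simpa using this
  exact irrational_sqrt_two ⟨q, this⟩

lemma I_notinR : Complex.I ∉ Rfield := by
  rintro ⟨r, hr⟩
  have := congrArg Complex.im hr
  simp at this

lemma E1_le_R : ℚ⟮(Real.sqrt 2 : ℂ)⟯ ≤ Rfield := by
  rw [adjoin_le_iff]
  rintro x hx
  rw [Set.mem_singleton_iff] at hx
  exact ⟨Real.sqrt 2, hx.symm⟩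

lemma finrank_E1 : finrank ℚ ℚ⟮(Real.sqrt 2 : ℂ)⟯ = 2 := by
  apply quad_finrank (Real.sqrt 2 : ℂ) (2 : ℚ) _ sqrt2_notin
  rw [← Complex.ofReal_pow, Real.sq_sqrt (by norm_num : (2:ℝ) ≥ 0)]
  norm_num

lemma finrank_E2 :
    finrank ℚ⟮(Real.sqrt 2 : ℂ)⟯ (adjoin ℚ⟮(Real.sqrt 2 : ℂ)⟯ ({Complex.I} : Set ℂ)) = 2 := by
  apply quad_finrank Complex.I (-1 : ℚ⟮(Real.sqrt 2 : ℂ)⟯)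
  · simp [Complex.I_sq]
  · rintro ⟨⟨y, hy⟩, hEq⟩
    have hyI : y = Complex.I := hEq
    subst hyI
    exact I_notinR (E1_le_R hy)

set_option synthInstance.maxHeartbeats 1000000 in
lemma finrank_four :
    Module.finrank ℚ
      (IntermediateField.adjoin ℚ ({Complex.I, (Real.sqrt 2 : ℂ)} : Set ℂ)) = 4 := by
  have hset : ({Complex.I, (Real.sqrt 2 : ℂ)} : Set ℂ) = {(Real.sqrt 2 : ℂ)} ∪ {Complex.I} := by
    ext z; simp [or_comm]
  rw [hset, ← IntermediateField.adjoin_adjoin_left ℚ ({(Real.sqrt 2 : ℂ)} : Set ℂ) {Complex.I}]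
  have key : finrank ℚ (adjoin ℚ⟮(Real.sqrt 2 : ℂ)⟯ ({Complex.I} : Set ℂ)) = 4 := by
    rw [← Module.finrank_mul_finrank ℚ ℚ⟮(Real.sqrt 2 : ℂ)⟯
      (adjoin ℚ⟮(Real.sqrt 2 : ℂ)⟯ ({Complex.I} : Set ℂ)), finrank_E1, finrank_E2]
  exact key

end Aux

theorem stmt10 :
    traceField = IntermediateField.adjoin ℚ ({Complex.I, (Real.sqrt 2 : ℂ)} : Set ℂ) ∧
    Module.finrank ℚ
      (IntermediateField.adjoin ℚ ({Complex.I, (Real.sqrt 2 : ℂ)} : Set ℂ)) = 4 := by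
  refine ⟨?_, finrank_four⟩
  set K := IntermediateField.adjoin ℚ ({Complex.I, (Real.sqrt 2 : ℂ)} : Set ℂ) with hK
  have hI : Complex.I ∈ K := subset_adjoin _ _ (by simp)
  have hr : (Real.sqrt 2 : ℂ) ∈ K := subset_adjoin _ _ (by simp)
  -- traces of t and h
  have htrt : t.trace = 1 + Complex.I := by
    rw [Matrix.trace_fin_two]; simp [t]; try ring
  have htrh : h.trace = -(Complex.I * Real.sqrt 2) := by
    rw [Matrix.trace_fin_two]; simp [h]; try ring
  have htG : t ∈ G := Submonoid.subset_closure (by simp)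
  have hhG : h ∈ G := Submonoid.subset_closure (by simp)
  -- inverses
  have inv2 : ∀ M : Matrix (Fin 2) (Fin 2) ℂ, M.det = 1 →
      M⁻¹ = !![M 1 1, -M 0 1; -M 1 0, M 0 0] := by
    intro M hdet
    rw [Matrix.inv_def, hdet, Matrix.adjugate_fin_two]
    simp
  have hdets : s.det = 1 := by simp [s, Matrix.det_fin_two]
  have hdett : t.det = 1 := by
    simp only [t, Matrix.det_fin_two_of]
    linear_combination (-1 : ℂ) * Complex.I_mul_I
  have hsq2 : (Real.sqrt 2 : ℂ) * (Real.sqrt 2 : ℂ) = 2 := by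
    rw [← Complex.ofReal_mul, Real.mul_self_sqrt (by norm_num)]
    norm_num
  have hdeth : h.det = 1 := by
    simp only [h, Matrix.det_fin_two_of]
    linear_combination (-5 * ((Real.sqrt 2 : ℂ) * (Real.sqrt 2 : ℂ))) * Complex.I_mul_I +
      5 * hsq2
  -- every element of G has entries in K
  have mem2 : ∀ {a b c d : ℂ}, a ∈ K → b ∈ K → c ∈ K → d ∈ K →
      ∀ i j, (!![a, b; c, d] : Matrix (Fin 2) (Fin 2) ℂ) i j ∈ K := by
    intro a b c d ha hb hc hd i j
    fin_cases i <;> fin_cases j <;> simp <;> assumption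
  have hq : ∀ q : ℚ, (q : ℂ) ∈ K := fun q => SubfieldClass.ratCast_mem K q
  have h2K : (2 : ℂ) ∈ K := by exact_mod_cast hq 2
  have h3K : (3 : ℂ) ∈ K := by exact_mod_cast hq 3
  have hsK : ∀ i j, s i j ∈ K :=
    mem2 K.one_mem K.zero_mem (K.neg_mem K.one_mem) K.one_mem
  have htK : ∀ i j, t i j ∈ K :=
    mem2 (K.mul_mem h2K hI) (K.sub_mem h2K hI) hI (K.sub_mem K.one_mem hI)
  have hhK : ∀ i j, h i j ∈ K :=
    mem2 (K.mul_mem (K.mul_mem h2K hI) hr)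
      (K.sub_mem (K.neg_mem h3K) (K.mul_mem hI hr))
      (K.add_mem (K.neg_mem h3K) (K.mul_mem hI hr))
      (K.mul_mem (K.mul_mem (K.neg_mem h3K) hI) hr)
  have entries : ∀ M ∈ G, ∀ i j, M i j ∈ K := by
    intro M hM
    refine Submonoid.closure_induction ?_ ?_ ?_ hM
    · intro x hx
      simp only [Set.mem_insert_iff, Set.mem_singleton_iff] at hx
      rcases hx with rfl | rfl | rfl | rfl | rfl | rfl
      · exact hsK
      · exact htK
      · exact hhK
      · rw [inv2 s hdets]
        exact mem2 (hsK 1 1) (K.neg_mem (hsK 0 1)) (K.neg_mem (hsK 1 0)) (hsK 0 0)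
      · rw [inv2 t hdett]
        exact mem2 (htK 1 1) (K.neg_mem (htK 0 1)) (K.neg_mem (htK 1 0)) (htK 0 0)
      · rw [inv2 h hdeth]
        exact mem2 (hhK 1 1) (K.neg_mem (hhK 0 1)) (K.neg_mem (hhK 1 0)) (hhK 0 0)
    · intro i j
      fin_cases i <;> fin_cases j <;>
        simp [Matrix.one_apply] <;> first | exact K.one_mem | exact K.zero_mem
    · intro x y _ _ hx hy i j
      rw [Matrix.mul_apply]
      exact K.sum_mem fun k _ => K.mul_mem (hx i k) (hy k j)
  apply le_antisymm
  · rw [traceField, adjoin_le_iff]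
    rintro x ⟨M, hM, rfl⟩
    rw [Matrix.trace_fin_two]
    exact K.add_mem (entries M hM 0 0) (entries M hM 1 1)
  · rw [hK, adjoin_le_iff]
    intro x hx
    have hIt : Complex.I ∈ traceField := by
      have h1 : (1 + Complex.I : ℂ) ∈ traceField := by
        apply subset_adjoin
        exact ⟨t, htG, htrt⟩
      have := traceField.sub_mem h1 traceField.one_mem
      simpa using this
    have hrt : (Real.sqrt 2 : ℂ) ∈ traceField := by
      have h1 : (-(Complex.I * Real.sqrt 2) : ℂ) ∈ traceField := by
        apply subset_adjoin
        exact ⟨h, hhG, htrh⟩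
      have h2 := traceField.mul_mem hIt h1
      have : Complex.I * -(Complex.I * ↑(Real.sqrt 2)) = (Real.sqrt 2 : ℂ) := by
        linear_combination (-(Real.sqrt 2 : ℂ)) * Complex.I_mul_I
      rwa [this] at h2
    rcases hx with rfl | hx
    · exact hIt
    · rw [Set.mem_singleton_iff] at hx; subst hx; exact hrt
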